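/- Let γ = (γ₁, …, γ_r) be a partition of n with r ≥ 2 such that (γ₂,…,γ_r) is a sign partition of S_{n-γ₁} and γ₂ + … + γ_r < 2γ₁. If β is a partition of n with χ^β_γ ∉ {0, 1, -1}, then β has exactly two hooks of length γ₁, and for each partition δ obtained from β by removing a γ₁-hook, χ^δ_{(γ₂,…,γ_r)} ≠ 0; in particular each such δ has a hook of length γ₂. -/

import Mathlib

/-!
A `q`-hook of a partition with beta-set `B` is an `x ∈ B` with `x - q ∉ B`. Removing all `k` of
them at once gives distinct numbers again, whose sum `∑ B - k q` is at least `C(|B|, 2)`; as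
`∑ B = n + C(|B|, 2)`, this forces `k q ≤ n`, so `k ≤ 2` when `n < 3 γ₁`. By the
Murnaghan–Nakayama rule `χ^β_γ` is a sum of `k` terms `± χ^δ_{(γ₂,…)}`, each in `{0, 1, -1}`
by the sign hypothesis, and such a sum leaves `{0, 1, -1}` only if `k = 2` and both terms are
nonzero. Finally a nonzero `χ^δ_{(γ₂,…)}` needs a `γ₂`-hook, since otherwise its
Murnaghan–Nakayama sum is empty.
-/

/-- The beta-set (set of first-column hook lengths) of a partition given as a
weakly decreasing list of parts. -/
def betaSet (l : List ℕ) : List ℕ :=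
  ((List.range l.length).zip l).map (fun p => p.2 + (l.length - 1 - p.1))

/-- Recover a partition (weakly decreasing list of positive parts) from a
list of distinct beta-numbers. -/
def fromBeta (b : List ℕ) : List ℕ :=
  let s := List.insertionSort (· ≥ ·) b
  (((List.range s.length).zip s).map (fun p => p.2 - (s.length - 1 - p.1))).filter (fun x => x ≠ 0)

/-- `MN β γ` is the value of the irreducible character of the symmetric group
indexed by the partition `β` at the conjugacy class of cycle type `γ`,
computed via the Murnaghan–Nakayama rule (phrased in terms of beta-numbers:
removing a rim hook of length `q` replaces a beta-number `x` by `x - q`,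
the sign being `(-1)` to the number of beta-numbers strictly between
`x - q` and `x`, i.e. the leg length of the hook). -/
def MN : List ℕ → List ℕ → ℤ
  | β, [] => if β = [] then 1 else 0
  | β, q :: γ =>
      ((betaSet β).map (fun x =>
        if q ≤ x ∧ x - q ∉ betaSet β then
          (-1) ^ ((betaSet β).filter (fun y => x - q < y ∧ y < x)).length *
            MN (fromBeta ((x - q) :: (betaSet β).erase x)) γ
        else 0)).sum

/-- `l` is a partition of `m`: a weakly decreasing list of positive parts
summing to `m`. -/
def IsPartition (l : List ℕ) (m : ℕ) : Prop :=
  l.Pairwise (· ≥ ·) ∧ (∀ i ∈ l, 0 < i) ∧ l.sum = m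

/-- The conjugate (transpose) partition: `(conjugate l)_i = #{j : l_j > i}`. -/
def conjugate (l : List ℕ) : List ℕ :=
  (List.range (l.foldr max 0)).map (fun i => (l.filter (fun p => i < p)).length)


def hookTops (q : ℕ) (B : List ℕ) : List ℕ :=
  B.filter (fun x => q ≤ x ∧ x - q ∉ B)

lemma mem_hookTops {q x : ℕ} {B : List ℕ} : x ∈ hookTops q B ↔ x ∈ B ∧ q ≤ x ∧ x - q ∉ B := by
  simp [hookTops]

def fromSortedBeta (s : List ℕ) : List ℕ :=
  ((List.range s.length).zip s).map (fun p => p.2 - (s.length - 1 - p.1))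

lemma map_zip_range_cons (h : ℕ → ℕ → ℕ) (a : ℕ) (t : List ℕ) :
    ((List.range (a :: t).length).zip (a :: t)).map (fun p => h p.2 ((a :: t).length - 1 - p.1)) =
      h a t.length :: ((List.range t.length).zip t).map (fun p => h p.2 (t.length - 1 - p.1)) := by
  apply List.ext_getElem
  · simp
  · intro i _ _
    rcases i with _ | i
    · simp [List.getElem_zip]
    · simp only [List.getElem_map, List.getElem_zip, List.getElem_range, List.getElem_cons_succ,
        List.length_cons]
      congr 1
      omega

lemma betaSet_cons (a : ℕ) (t : List ℕ) : betaSet (a :: t) = (a + t.length) :: betaSet t := by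
  simpa [betaSet] using map_zip_range_cons (· + ·) a t

lemma fromSortedBeta_cons (a : ℕ) (t : List ℕ) :
    fromSortedBeta (a :: t) = (a - t.length) :: fromSortedBeta t := by
  simpa [fromSortedBeta] using map_zip_range_cons (· - ·) a t

lemma length_betaSet (l : List ℕ) : (betaSet l).length = l.length := by
  simp [betaSet]

lemma sum_betaSet (l : List ℕ) : (betaSet l).sum = l.sum + l.length.choose 2 := by
  induction l with
  | nil => rfl
  | cons a t ih =>
    rw [betaSet_cons, List.sum_cons, ih, List.length_cons, Nat.choose_succ_succ',
      Nat.choose_one_right, List.sum_cons]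
    ring

lemma lt_of_mem_betaSet {l : List ℕ} {c : ℕ} (hl : l.Pairwise (· ≥ ·)) (hc : ∀ x ∈ l, x ≤ c) :
    ∀ y ∈ betaSet l, y < c + l.length := by
  induction l with
  | nil => simp [betaSet]
  | cons a t ih =>
    have ht := ih hl.of_cons (fun x hx => hc x (List.mem_cons_of_mem _ hx))
    have ha := hc a List.mem_cons_self
    rw [betaSet_cons]
    intro y hy
    rcases List.mem_cons.1 hy with rfl | hy
    · simp only [List.length_cons]; omega
    · have := ht y hy
      simp only [List.length_cons]; omega

lemma pairwise_gt_betaSet {l : List ℕ} (hl : l.Pairwise (· ≥ ·)) : (betaSet l).Pairwise (· > ·) := by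
  induction l with
  | nil => simp [betaSet]
  | cons a t ih =>
    rw [betaSet_cons]
    exact List.pairwise_cons.2
      ⟨lt_of_mem_betaSet hl.of_cons (fun x hx => List.rel_of_pairwise_cons hl hx), ih hl.of_cons⟩

lemma nodup_betaSet {l : List ℕ} (hl : l.Pairwise (· ≥ ·)) : (betaSet l).Nodup :=
  (pairwise_gt_betaSet hl).imp ne_of_gt

lemma length_le_of_pairwise_gt {s : List ℕ} (hs : s.Pairwise (· > ·)) {b : ℕ}
    (hb : ∀ x ∈ s, x < b) : s.length ≤ b := by
  induction s generalizing b with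
  | nil => simp
  | cons a t ih =>
    have := ih hs.of_cons (fun x hx => List.rel_of_pairwise_cons hs hx)
    have := hb a List.mem_cons_self
    simp only [List.length_cons]; omega

lemma add_length_le_of_mem_fromSortedBeta {s : List ℕ} (hs : s.Pairwise (· > ·)) {b : ℕ}
    (hb : ∀ x ∈ s, x < b) : ∀ y ∈ fromSortedBeta s, y + s.length ≤ b := by
  induction s generalizing b with
  | nil => simp [fromSortedBeta]
  | cons a t ih =>
    have hta : ∀ x ∈ t, x < a := fun x hx => List.rel_of_pairwise_cons hs hx
    have hlen := length_le_of_pairwise_gt hs.of_cons hta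
    have hab := hb a List.mem_cons_self
    rw [fromSortedBeta_cons]
    intro y hy
    rcases List.mem_cons.1 hy with rfl | hy
    · simp only [List.length_cons]; omega
    · have := ih hs.of_cons hta y hy
      simp only [List.length_cons]; omega

lemma pairwise_ge_fromSortedBeta {s : List ℕ} (hs : s.Pairwise (· > ·)) :
    (fromSortedBeta s).Pairwise (· ≥ ·) := by
  induction s with
  | nil => simp [fromSortedBeta]
  | cons a t ih =>
    have hta : ∀ x ∈ t, x < a := fun x hx => List.rel_of_pairwise_cons hs hx
    rw [fromSortedBeta_cons]
    refine List.pairwise_cons.2 ⟨fun y hy => ?_, ih hs.of_cons⟩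
    have := add_length_le_of_mem_fromSortedBeta hs.of_cons hta y hy
    omega

lemma sum_fromSortedBeta_add_choose {s : List ℕ} (hs : s.Pairwise (· > ·)) :
    (fromSortedBeta s).sum + s.length.choose 2 = s.sum := by
  induction s with
  | nil => rfl
  | cons a t ih =>
    have hlen := length_le_of_pairwise_gt hs.of_cons (fun x hx => List.rel_of_pairwise_cons hs hx)
    have := ih hs.of_cons
    have hchoose : (t.length + 1).choose 2 = t.length.choose 2 + t.length := by
      simp [Nat.choose_succ_succ, add_comm]
    rw [fromSortedBeta_cons, List.length_cons, hchoose, List.sum_cons, List.sum_cons]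
    omega

lemma pairwise_gt_insertionSort {b : List ℕ} (hb : b.Nodup) :
    (b.insertionSort (· ≥ ·)).Pairwise (· > ·) :=
  ((List.pairwise_insertionSort _ b).and ((List.perm_insertionSort _ b).nodup_iff.2 hb)).imp
    fun h => lt_of_le_of_ne h.1 h.2.symm

lemma sum_fromSortedBeta_insertionSort_add_choose {b : List ℕ} (hb : b.Nodup) :
    (fromSortedBeta (b.insertionSort (· ≥ ·))).sum + b.length.choose 2 = b.sum := by
  have hperm := List.perm_insertionSort (· ≥ ·) b
  rw [← hperm.length_eq, ← hperm.sum_eq]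
  exact sum_fromSortedBeta_add_choose (pairwise_gt_insertionSort hb)

lemma choose_two_le_sum_of_nodup {b : List ℕ} (hb : b.Nodup) : b.length.choose 2 ≤ b.sum := by
  have := sum_fromSortedBeta_insertionSort_add_choose hb
  omega

lemma sum_filter_ne_zero (l : List ℕ) : (l.filter (fun x => x ≠ 0)).sum = l.sum := by
  induction l with
  | nil => rfl
  | cons a t ih =>
    rw [List.filter_cons]
    split_ifs with h
    · rw [List.sum_cons, List.sum_cons, ih]
    · simp_all

lemma isPartition_fromBeta {b : List ℕ} (hb : b.Nodup) :
    IsPartition (fromBeta b) (b.sum - b.length.choose 2) := by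
  have hfrom : fromBeta b = (fromSortedBeta (b.insertionSort (· ≥ ·))).filter (fun x => x ≠ 0) :=
    rfl
  have hsum := sum_fromSortedBeta_insertionSort_add_choose hb
  refine ⟨?_, ?_, ?_⟩
  · rw [hfrom]
    exact (pairwise_ge_fromSortedBeta (pairwise_gt_insertionSort hb)).filter _
  · intro i hi
    rw [hfrom, List.mem_filter] at hi
    simpa [Nat.pos_iff_ne_zero] using hi.2
  · rw [hfrom, sum_filter_ne_zero]
    omega

lemma isPartition_removeHook {β : List ℕ} {n q x : ℕ} (hβ : IsPartition β n)
    (hx : x ∈ hookTops q (betaSet β)) :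
    IsPartition (fromBeta ((x - q) :: (betaSet β).erase x)) (n - q) := by
  obtain ⟨hxB, hqx, hxq⟩ := mem_hookTops.1 hx
  have hB := nodup_betaSet hβ.1
  have hnd : ((x - q) :: (betaSet β).erase x).Nodup :=
    (hB.erase x).cons fun h => hxq (List.mem_of_mem_erase h)
  have hlen : ((x - q) :: (betaSet β).erase x).length = β.length := by
    rw [List.length_cons, List.length_erase_of_mem hxB, length_betaSet]
    have : 0 < (betaSet β).length := List.length_pos_of_mem hxB
    rw [length_betaSet] at this
    omega
  have hsum : x + ((betaSet β).erase x).sum = n + β.length.choose 2 := by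
    rw [← hβ.2.2, ← sum_betaSet, (List.perm_cons_erase hxB).sum_eq, List.sum_cons]
  convert isPartition_fromBeta hnd using 1
  rw [hlen, List.sum_cons]
  omega

lemma sum_map_ite_sub_add_length_filter_mul {l : List ℕ} {q : ℕ} (p : ℕ → Prop) [DecidablePred p]
    (hq : ∀ x ∈ l, p x → q ≤ x) :
    (l.map fun x => if p x then x - q else x).sum + (l.filter p).length * q = l.sum := by
  induction l with
  | nil => simp
  | cons a t ih =>
    have := ih fun x hx => hq x (List.mem_cons_of_mem _ hx)
    by_cases hpa : p a
    · have := hq a List.mem_cons_self hpa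
      simp only [List.map_cons, List.sum_cons, List.filter_cons, hpa, if_true, decide_true,
        List.length_cons, add_one_mul]
      omega
    · simp only [List.map_cons, List.sum_cons, List.filter_cons, hpa, if_false, decide_false,
        Bool.false_eq_true]
      omega

/-- Removing all `q`-hooks at once yields distinct beta-numbers again, whose sum is bounded below
by `choose_two_le_sum_of_nodup`. -/
lemma length_hookTops_mul_add_choose_le_sum {B : List ℕ} (hB : B.Nodup) (q : ℕ) :
    (hookTops q B).length * q + B.length.choose 2 ≤ B.sum := by
  let p : ℕ → Prop := fun x => q ≤ x ∧ x - q ∉ B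
  have hinj : ∀ x ∈ B, ∀ y ∈ B,
      (if p x then x - q else x) = (if p y then y - q else y) → x = y := by
    intro x hx y hy hxy
    by_cases hpx : p x <;> by_cases hpy : p y <;> simp only [hpx, hpy, if_true, if_false] at hxy
    · have := hpx.1; have := hpy.1; omega
    · exact absurd (hxy ▸ hy) hpx.2
    · exact absurd (hxy ▸ hx) hpy.2
    · exact hxy
  have hchoose := choose_two_le_sum_of_nodup (hB.map_on hinj)
  have hsum := sum_map_ite_sub_add_length_filter_mul (l := B) p fun _ _ hx => hx.1
  rw [List.length_map] at hchoose
  change (B.filter p).length * q + _ ≤ _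
  omega

lemma MN_cons_eq_sum_hookTops (β : List ℕ) (q : ℕ) (γ : List ℕ) :
    MN β (q :: γ) = ((hookTops q (betaSet β)).map fun x =>
      (-1) ^ ((betaSet β).filter fun y => x - q < y ∧ y < x).length *
        MN (fromBeta ((x - q) :: (betaSet β).erase x)) γ).sum := by
  rw [MN, List.sum_map_ite]
  simp [hookTops]

lemma exists_hook_of_MN_ne_zero {δ : List ℕ} {q : ℕ} {γ : List ℕ} (h : MN δ (q :: γ) ≠ 0) :
    ∃ y ∈ betaSet δ, q ≤ y ∧ y - q ∉ betaSet δ := by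
  by_contra! hno
  have : hookTops q (betaSet δ) = [] := List.filter_eq_nil_iff.2 fun y hy => by simpa using hno y hy
  exact h (by rw [MN_cons_eq_sum_hookTops, this]; rfl)

lemma neg_one_pow_mul_mem {e : ℕ} {t : ℤ} (ht : t ∈ ({0, 1, -1} : Set ℤ)) :
    (-1 : ℤ) ^ e * t ∈ ({0, 1, -1} : Set ℤ) := by
  rcases neg_one_pow_eq_or ℤ e with h | h <;> rcases ht with rfl | rfl | rfl <;> simp [h]

lemma List.length_eq_two_of_sum_notMem {M : Type*} [AddMonoid M] {S : Set M} (h0 : 0 ∈ S)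
    {l : List M} (hS : ∀ t ∈ l, t ∈ S) (hlen : l.length ≤ 2) (hsum : l.sum ∉ S) :
    l.length = 2 ∧ ∀ t ∈ l, t ≠ 0 := by
  match l, hlen with
  | [], _ => exact absurd h0 hsum
  | [a], _ => exact absurd (by simpa using hS a (by simp)) hsum
  | [a, b], _ =>
    refine ⟨rfl, ?_⟩
    simp only [List.mem_cons, List.not_mem_nil, or_false, forall_eq_or_imp, forall_eq]
    constructor <;> rintro rfl
    · exact hsum (by simpa using hS b (by simp))
    · exact hsum (by simpa using hS a (by simp))

/-- Let `γ = (γ₁, γ₂, …, γ_r)` be a partition of `n` with `r ≥ 2` such that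
`(γ₂,…,γ_r)` is a sign partition of `S_{n-γ₁}` (all irreducible character
values on that cycle type lie in `{0, 1, -1}`) and `γ₂ + … + γ_r < 2γ₁`.
If `β` is a partition of `n` whose character value at cycle type `γ` is not
in `{0, 1, -1}`, then `β` has exactly two hooks of length `γ₁` and, for each
partition `δ` obtained from `β` by removing a `γ₁`-hook, the character value
of `δ` at `(γ₂,…,γ_r)` is nonzero; in particular each such `δ` has a hook of
length `γ₂`.  (Hooks of length `q` in a partition with beta-set `B`
correspond to elements `x ∈ B` with `q ≤ x` and `x - q ∉ B`, and removing
such a hook replaces `x` by `x - q`.) -/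
theorem stmt_9 (n γ₁ γ₂ : ℕ) (γr : List ℕ)
    (hγ : IsPartition (γ₁ :: γ₂ :: γr) n)
    (hsign : ∀ δ : List ℕ, IsPartition δ (n - γ₁) →
      MN δ (γ₂ :: γr) ∈ ({0, 1, -1} : Set ℤ))
    (hsmall : (γ₂ :: γr).sum < 2 * γ₁)
    (β : List ℕ) (hβ : IsPartition β n)
    (hval : MN β (γ₁ :: γ₂ :: γr) ∉ ({0, 1, -1} : Set ℤ)) :
    ((betaSet β).filter (fun x => γ₁ ≤ x ∧ x - γ₁ ∉ betaSet β)).length = 2 ∧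
    ∀ x ∈ betaSet β, γ₁ ≤ x → x - γ₁ ∉ betaSet β →
      (MN (fromBeta ((x - γ₁) :: (betaSet β).erase x)) (γ₂ :: γr) ≠ 0 ∧
       ∃ y ∈ betaSet (fromBeta ((x - γ₁) :: (betaSet β).erase x)),
         γ₂ ≤ y ∧ y - γ₂ ∉ betaSet (fromBeta ((x - γ₁) :: (betaSet β).erase x))) := by
  have hn : n < 3 * γ₁ := by
    have := hγ.2.2
    simp only [List.sum_cons] at this hsmall
    omega
  have hhooks : (hookTops γ₁ (betaSet β)).length ≤ 2 := by
    have := length_hookTops_mul_add_choose_le_sum (nodup_betaSet hβ.1) γ₁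
    rw [sum_betaSet, hβ.2.2, length_betaSet] at this
    by_contra! h3
    nlinarith
  rw [MN_cons_eq_sum_hookTops] at hval
  obtain ⟨htwo, hterms⟩ := List.length_eq_two_of_sum_notMem (by simp)
    (by simpa using fun x hx => neg_one_pow_mul_mem (hsign _ (isPartition_removeHook hβ hx)))
    (by rwa [List.length_map]) hval
  refine ⟨by rwa [List.length_map] at htwo, fun x hx hqx hxq => ?_⟩
  have hne := right_ne_zero_of_mul
    (hterms _ (List.mem_map_of_mem (mem_hookTops.2 ⟨hx, hqx, hxq⟩)))
  exact ⟨hne, exists_hook_of_MN_ne_zero hne⟩
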